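/- In ℂ(x)[∂], the operator L = ∂³ − (6/x²)∂ + 12/x³ + h commutes with A2 = ∂⁵ − (10/x²)∂³ + (40/x³)∂² − (80/x⁴)∂ + 80/x⁵ for every complex constant h. -/

import Mathlib

/-!
`ratD` is a `ℂ`-derivation of `ℂ(x)` with `x' = 1`: the quotient rule gives the same value
on every representation `p / q`, not only on the reduced one, which makes additivity and
the Leibniz rule easy. In any differential field with `x' = 1` and `c' = 0`, both sides
expand, via `(x⁻¹)' = -x⁻²`, into the same differential polynomial in `x⁻¹`, `c` and `f`.
-/

open RatFunc

/-- The derivation `d/dx` on the differential field `ℂ(x)` of rational functions,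
given by the quotient rule on the (coprime) numerator and denominator. -/
noncomputable def ratD (f : RatFunc ℂ) : RatFunc ℂ :=
  (algebraMap (Polynomial ℂ) (RatFunc ℂ) (Polynomial.derivative f.num)
      * algebraMap (Polynomial ℂ) (RatFunc ℂ) f.denom
    - algebraMap (Polynomial ℂ) (RatFunc ℂ) f.num
      * algebraMap (Polynomial ℂ) (RatFunc ℂ) (Polynomial.derivative f.denom))
    / algebraMap (Polynomial ℂ) (RatFunc ℂ) f.denom ^ 2


/-- The operator `L = ∂³ - (6/x²)∂ + 12/x³ + h`, acting on `ℂ(x)`. -/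
noncomputable def opL (h : ℂ) (f : RatFunc ℂ) : RatFunc ℂ :=
  ratD^[3] f - 6 / X ^ 2 * ratD f + (12 / X ^ 3 + RatFunc.C h) * f

/-- The operator `A₂ = ∂⁵ - (10/x²)∂³ + (40/x³)∂² - (80/x⁴)∂ + 80/x⁵`. -/
noncomputable def opA2 (f : RatFunc ℂ) : RatFunc ℂ :=
  ratD^[5] f - 10 / X ^ 2 * ratD^[3] f + 40 / X ^ 3 * ratD^[2] f
    - 80 / X ^ 4 * ratD f + 80 / X ^ 5 * f

namespace Derivation

variable {R K : Type*} [CommRing R] [Field K] [Algebra R K] (D : Derivation R K K)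

def opL (x c f : K) : K :=
  (⇑D)^[3] f - 6 / x ^ 2 * D f + (12 / x ^ 3 + c) * f

def opA2 (x f : K) : K :=
  (⇑D)^[5] f - 10 / x ^ 2 * (⇑D)^[3] f + 40 / x ^ 3 * (⇑D)^[2] f
    - 80 / x ^ 4 * D f + 80 / x ^ 5 * f

theorem map_ofNat (n : ℕ) [n.AtLeastTwo] : D (OfNat.ofNat n : K) = 0 :=
  D.map_natCast n

theorem map_inv_pow_of_map_eq_one {x : K} (hx : D x = 1) (n : ℕ) :
    D (x⁻¹ ^ n) = -n * x⁻¹ ^ (n + 1) := by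
  rw [D.leibniz_pow, D.leibniz_inv, hx]
  rcases n with _ | n
  · simp
  · simp only [smul_eq_mul]
    push_cast
    ring

theorem opL_opA2_comm {x c : K} (hx : D x = 1) (hc : D c = 0) (f : K) :
    D.opL x c (D.opA2 x f) = D.opA2 x (D.opL x c f) := by
  simp only [opL, opA2, Function.iterate_succ, Function.iterate_zero, Function.comp_apply,
    Function.id_def, div_eq_mul_inv, ← inv_pow]
  simp only [D.map_add, D.map_sub, D.map_neg, D.map_zero, D.map_natCast, D.map_ofNat,
    D.leibniz, D.map_inv_pow_of_map_eq_one hx, hc, smul_eq_mul]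
  ring

end Derivation

open Polynomial (derivative derivative_mul)

local notation "ι" => algebraMap (Polynomial ℂ) (RatFunc ℂ)

theorem ratD_div_algebraMap (p q : Polynomial ℂ) (hq : q ≠ 0) :
    ratD (ι p / ι q) = (ι (derivative p) * ι q - ι p * ι (derivative q)) / ι q ^ 2 := by
  set f := ι p / ι q
  have hf : ι f.denom ≠ 0 := algebraMap_ne_zero f.denom_ne_zero
  have hq' : ι q ≠ 0 := algebraMap_ne_zero hq
  have cross : f.num * q = p * f.denom := by
    apply algebraMap_injective ℂ
    have := num_div_denom f
    rw [div_eq_div_iff hf hq'] at this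
    simpa only [map_mul] using this
  have cross' := congrArg (ι ∘ derivative) cross
  have cross := congrArg ι cross
  simp only [Function.comp_apply, derivative_mul, map_add, map_mul] at cross cross'
  rw [ratD, div_eq_div_iff (pow_ne_zero 2 hf) (pow_ne_zero 2 hq')]
  linear_combination (ι f.denom * ι q) * cross'
    - (ι (derivative f.denom) * ι q + ι (derivative q) * ι f.denom) * cross

theorem ratD_algebraMap (p : Polynomial ℂ) : ratD (ι p) = ι (derivative p) := by
  simpa using ratD_div_algebraMap p 1 one_ne_zero

theorem ratD_add (f g : RatFunc ℂ) : ratD (f + g) = ratD f + ratD g := by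
  rw [← num_div_denom f, ← num_div_denom g]
  have hf : ι f.denom ≠ 0 := algebraMap_ne_zero f.denom_ne_zero
  have hg : ι g.denom ≠ 0 := algebraMap_ne_zero g.denom_ne_zero
  rw [div_add_div _ _ hf hg, ← map_mul, ← map_mul, ← map_mul, ← map_add,
    ratD_div_algebraMap _ _ (mul_ne_zero f.denom_ne_zero g.denom_ne_zero),
    ratD_div_algebraMap _ _ f.denom_ne_zero, ratD_div_algebraMap _ _ g.denom_ne_zero]
  simp only [derivative_mul, map_add, map_mul]
  field_simp
  ring

theorem ratD_mul (f g : RatFunc ℂ) : ratD (f * g) = f * ratD g + g * ratD f := by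
  rw [← num_div_denom f, ← num_div_denom g]
  have hf : ι f.denom ≠ 0 := algebraMap_ne_zero f.denom_ne_zero
  have hg : ι g.denom ≠ 0 := algebraMap_ne_zero g.denom_ne_zero
  rw [div_mul_div_comm, ← map_mul, ← map_mul,
    ratD_div_algebraMap _ _ (mul_ne_zero f.denom_ne_zero g.denom_ne_zero),
    ratD_div_algebraMap _ _ f.denom_ne_zero, ratD_div_algebraMap _ _ g.denom_ne_zero]
  simp only [derivative_mul, map_add, map_mul]
  field_simp
  ring

theorem ratD_smul (c : ℂ) (f : RatFunc ℂ) : ratD (c • f) = c • ratD f := by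
  rw [Algebra.smul_def, Algebra.smul_def, IsScalarTower.algebraMap_apply ℂ (Polynomial ℂ),
    ratD_mul, ratD_algebraMap, Polynomial.algebraMap_apply, Polynomial.derivative_C]
  simp

noncomputable def ratDerivation : Derivation ℂ (RatFunc ℂ) (RatFunc ℂ) :=
  Derivation.mk' ⟨⟨ratD, ratD_add⟩, ratD_smul⟩ ratD_mul

theorem ratD_X : ratD X = 1 := by
  simpa using ratD_algebraMap Polynomial.X

/-- `L` and `A₂` commute in `ℂ(x)[∂]`. -/
theorem stmt5 (h : ℂ) : ∀ f : RatFunc ℂ, opL h (opA2 f) = opA2 (opL h f) :=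
  ratDerivation.opL_opA2_comm ratD_X (ratDerivation.map_algebraMap h)
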